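/- arXiv:1904.11285 — 2 statements merged into one kernel-verified Lean document; each statement's English description precedes it below -/
import Mathlib

section
/- Let P be a connected graph on k vertices with maximum degree bounded by a constant d. Then the number of pairwise non-isomorphic separations of P of order at most √k is at most 2^{O(√k · log k)}, where two separations (X,Y), (X',Y') are isomorphic if X ∩ Y = X' ∩ Y' and some automorphism of P fixing X ∩ Y pointwise maps X to X'. -/
/-!
A separation `(X, Y)` of a connected graph is determined by its separator `S = X ∩ Y` together
with the trace of `X` on `N(S) ∪ {v₀}`, where `N(S)` is the outer boundary of `S`: a walk
avoiding `S` never changes sides, and every vertex outside `S` reaches `N(S)` by such a walk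
(or `v₀`, when `S = ∅`). With degrees at most `d` we have `|N(S)| ≤ d |S|`, so there are at most
`(m + 1) k^m · 2^(d m + 1)` separations of order at most `m`; for `m = ⌊√k⌋` this is at most
`k^((d + 3) √k) = 2^((d + 3) / log 2 · √k · log k)`.
-/

open Finset

theorem Finset.card_filter_card_le_le {α : Type*} [Fintype α] [DecidableEq α] [Nonempty α]
    (m : ℕ) : #{s : Finset α | s.card ≤ m} ≤ (m + 1) * Fintype.card α ^ m := by
  have hsub : ({s : Finset α | s.card ≤ m} : Finset (Finset α)) ⊆
      (range (m + 1)).biUnion fun i => powersetCard i univ := fun s hs =>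
    mem_biUnion.2 ⟨s.card, mem_range.2 (Nat.lt_succ_of_le (mem_filter.1 hs).2),
      mem_powersetCard.2 ⟨subset_univ s, rfl⟩⟩
  calc _ ≤ #((range (m + 1)).biUnion fun i => powersetCard i (univ : Finset α)) :=
        card_le_card hsub
    _ ≤ ∑ i ∈ range (m + 1), #(powersetCard i (univ : Finset α)) := card_biUnion_le
    _ ≤ ∑ _i ∈ range (m + 1), Fintype.card α ^ m := sum_le_sum fun i hi => by
        rw [card_powersetCard, card_univ]
        exact (Nat.choose_le_pow _ i).trans
          (Nat.pow_le_pow_right Fintype.card_pos (Nat.lt_succ_iff.1 (mem_range.1 hi)))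
    _ = (m + 1) * Fintype.card α ^ m := by rw [sum_const, card_range, smul_eq_mul]

namespace SimpleGraph

variable {V : Type*} (G : SimpleGraph V)

def IsSeparation (X Y : Set V) : Prop :=
  X ∪ Y = Set.univ ∧ ∀ a ∈ X \ Y, ∀ b ∈ Y \ X, ¬ G.Adj a b

def outerBoundary (S : Set V) : Set V :=
  {b | b ∉ S ∧ ∃ s ∈ S, G.Adj b s}

variable {G} {X Y X' Y' : Set V}

namespace IsSeparation

theorem right_eq (h : G.IsSeparation X Y) : Y = (X ∩ Y) ∪ Xᶜ := by
  ext v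
  have hv : v ∈ X ∪ Y := h.1 ▸ Set.mem_univ v
  simp only [Set.mem_union, Set.mem_inter_iff, Set.mem_compl_iff] at hv ⊢
  tauto

theorem mem_left_iff_of_adj (h : G.IsSeparation X Y) {a b : V} (hab : G.Adj a b)
    (ha : a ∉ X ∩ Y) (hb : b ∉ X ∩ Y) : a ∈ X ↔ b ∈ X := by
  have mem_of_mem :
      ∀ {u w : V}, G.Adj u w → u ∉ X ∩ Y → w ∉ X ∩ Y → u ∈ X → w ∈ X := by
    intro u w huw hu hw huX
    by_contra hwX
    have hwY : w ∈ Y := (h.1 ▸ Set.mem_univ w : w ∈ X ∪ Y).resolve_left hwX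
    exact h.2 u ⟨huX, fun huY => hu ⟨huX, huY⟩⟩ w ⟨hwY, hwX⟩ huw
  exact ⟨mem_of_mem hab ha hb, mem_of_mem hab.symm hb ha⟩

theorem mem_left_iff_of_walk (h : G.IsSeparation X Y) {u v : V} (w : G.Walk u v)
    (hw : ∀ x ∈ w.support, x ∉ X ∩ Y) : u ∈ X ↔ v ∈ X := by
  induction w with
  | nil => rfl
  | cons hab p ih =>
    rw [Walk.support_cons, List.forall_mem_cons] at hw
    exact (h.mem_left_iff_of_adj hab hw.1 (hw.2 _ p.start_mem_support)).trans (ih hw.2)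

end IsSeparation

theorem Walk.exists_walk_avoiding_to_outerBoundary {S : Set V} {v t : V} (w : G.Walk v t)
    (hv : v ∉ S) (ht : t ∈ S) :
    ∃ b ∈ G.outerBoundary S, ∃ w' : G.Walk v b, ∀ x ∈ w'.support, x ∉ S := by
  induction w with
  | nil => exact absurd ht hv
  | @cons a u _ hau p ih =>
    by_cases hu : u ∈ S
    · exact ⟨a, ⟨hv, u, hu, hau⟩, Walk.nil, by simpa using hv⟩
    · obtain ⟨b, hb, w', hw'⟩ := ih hu ht
      refine ⟨b, hb, Walk.cons hau w', ?_⟩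
      rw [Walk.support_cons, List.forall_mem_cons]
      exact ⟨hv, hw'⟩

theorem Connected.exists_walk_avoiding_to_insert_outerBoundary (hG : G.Connected) (v₀ : V)
    {S : Set V} {v : V} (hv : v ∉ S) :
    ∃ b ∈ insert v₀ (G.outerBoundary S), ∃ w : G.Walk v b, ∀ x ∈ w.support, x ∉ S := by
  rcases S.eq_empty_or_nonempty with rfl | ⟨t, ht⟩
  · exact ⟨v₀, Set.mem_insert _ _, (hG v v₀).some, fun x _ => Set.notMem_empty x⟩
  · obtain ⟨b, hb, hw⟩ := (hG v t).some.exists_walk_avoiding_to_outerBoundary hv ht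
    exact ⟨b, Set.mem_insert_of_mem _ hb, hw⟩

theorem IsSeparation.left_subset (hG : G.Connected) (v₀ : V)
    (h : G.IsSeparation X Y) (h' : G.IsSeparation X' Y') (hS : X ∩ Y = X' ∩ Y')
    (hX : X ∩ insert v₀ (G.outerBoundary (X ∩ Y)) ⊆ X') : X ⊆ X' := by
  intro v hv
  by_cases hvS : v ∈ X ∩ Y
  · exact (hS ▸ hvS).1
  obtain ⟨b, hb, w, hw⟩ := hG.exists_walk_avoiding_to_insert_outerBoundary v₀ hvS
  have hbX : b ∈ X := (h.mem_left_iff_of_walk w hw).1 hv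
  exact (h'.mem_left_iff_of_walk w (hS ▸ hw)).2 (hX ⟨hbX, hb⟩)

theorem IsSeparation.eq_of_inter_insert_outerBoundary_eq (hG : G.Connected) (v₀ : V)
    (h : G.IsSeparation X Y) (h' : G.IsSeparation X' Y') (hS : X ∩ Y = X' ∩ Y')
    (hX : X ∩ insert v₀ (G.outerBoundary (X ∩ Y)) =
      X' ∩ insert v₀ (G.outerBoundary (X ∩ Y))) :
    (X, Y) = (X', Y') := by
  have hXX' : X ⊆ X' := h.left_subset hG v₀ h' hS (hX.le.trans Set.inter_subset_left)
  have hX'X : X' ⊆ X :=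
    h'.left_subset hG v₀ h hS.symm (hS ▸ hX.ge.trans Set.inter_subset_left)
  have hXeq : X = X' := hXX'.antisymm hX'X
  rw [h.right_eq, h'.right_eq, hS, hXeq]

theorem ncard_outerBoundary_le [Finite V] {d : ℕ} (hdeg : ∀ v, (G.neighborSet v).ncard ≤ d)
    (S : Finset V) : (G.outerBoundary S).ncard ≤ d * S.card := by
  have hsub : G.outerBoundary S ⊆ ⋃ s ∈ S, G.neighborSet s := by
    rintro b ⟨-, s, hs, hbs⟩
    exact Set.mem_biUnion hs hbs.symm
  calc (G.outerBoundary S).ncard ≤ (⋃ s ∈ S, G.neighborSet s).ncard :=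
        Set.ncard_le_ncard hsub
    _ ≤ ∑ s ∈ S, (G.neighborSet s).ncard := S.set_ncard_biUnion_le _
    _ ≤ ∑ _s ∈ S, d := sum_le_sum fun s _ => hdeg s
    _ = d * S.card := by rw [sum_const, smul_eq_mul, mul_comm]

theorem ncard_separations_inter_eq_le [Finite V] (hG : G.Connected) {d : ℕ}
    (hdeg : ∀ v, (G.neighborSet v).ncard ≤ d) (S : Finset V) :
    {p : Set V × Set V | G.IsSeparation p.1 p.2 ∧ p.1 ∩ p.2 = S}.ncard ≤
      2 ^ (d * S.card + 1) := by
  obtain ⟨v₀⟩ := hG.nonempty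
  set W := insert v₀ (G.outerBoundary S)
  have hinj : Set.InjOn (fun p : Set V × Set V => p.1 ∩ W)
      {p | G.IsSeparation p.1 p.2 ∧ p.1 ∩ p.2 = S} := by
    rintro ⟨X, Y⟩ ⟨h, hS⟩ ⟨X', Y'⟩ ⟨h', hS'⟩ hW
    dsimp only at hS hS' hW
    exact h.eq_of_inter_insert_outerBoundary_eq hG v₀ h' (hS.trans hS'.symm) (hS ▸ hW)
  calc _ ≤ (𝒫 W).ncard :=
        Set.ncard_le_ncard_of_injOn _ (fun p _ => Set.inter_subset_right) hinj
    _ = 2 ^ W.ncard := Set.ncard_powerset W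
    _ ≤ 2 ^ (d * S.card + 1) := by
        gcongr
        · norm_num
        · exact (Set.ncard_insert_le _ _).trans
            (by gcongr; exact ncard_outerBoundary_le hdeg S)

theorem ncard_separations_order_le [Fintype V] (hG : G.Connected) {d : ℕ}
    (hdeg : ∀ v, (G.neighborSet v).ncard ≤ d) (m : ℕ) :
    {p : Set V × Set V | G.IsSeparation p.1 p.2 ∧ (p.1 ∩ p.2).ncard ≤ m}.ncard ≤
      (m + 1) * Fintype.card V ^ m * 2 ^ (d * m + 1) := by
  classical
  have := hG.nonempty
  set T : Finset (Finset V) := {S | S.card ≤ m}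
  have hsub : {p : Set V × Set V | G.IsSeparation p.1 p.2 ∧ (p.1 ∩ p.2).ncard ≤ m} ⊆
      ⋃ S ∈ T, {p | G.IsSeparation p.1 p.2 ∧ p.1 ∩ p.2 = S} := by
    rintro p ⟨h, hm⟩
    refine Set.mem_biUnion (x := (p.1 ∩ p.2).toFinset) ?_ ⟨h, (Set.coe_toFinset _).symm⟩
    rw [mem_coe, mem_filter, ← Set.ncard_eq_toFinset_card']
    exact ⟨mem_univ _, hm⟩
  calc _ ≤ (⋃ S ∈ T, {p : Set V × Set V | G.IsSeparation p.1 p.2 ∧ p.1 ∩ p.2 = S}).ncard :=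
        Set.ncard_le_ncard hsub
    _ ≤ ∑ S ∈ T, {p : Set V × Set V | G.IsSeparation p.1 p.2 ∧ p.1 ∩ p.2 = S}.ncard :=
        T.set_ncard_biUnion_le _
    _ ≤ ∑ _S ∈ T, 2 ^ (d * m + 1) := sum_le_sum fun S hS =>
        (ncard_separations_inter_eq_le hG hdeg S).trans
          (Nat.pow_le_pow_right two_pos (by gcongr; exact (mem_filter.1 hS).2))
    _ = #T * 2 ^ (d * m + 1) := by rw [sum_const, smul_eq_mul]
    _ ≤ (m + 1) * Fintype.card V ^ m * 2 ^ (d * m + 1) := by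
        gcongr
        exact card_filter_card_le_le m

end SimpleGraph

theorem succ_mul_pow_mul_two_pow_le {k m : ℕ} (d : ℕ) (hk : 2 ≤ k) (hm : m < k) :
    (m + 1) * k ^ m * 2 ^ (d * m + 1) ≤ k ^ ((d + 1) * m + 2) :=
  calc (m + 1) * k ^ m * 2 ^ (d * m + 1) ≤ k * k ^ m * k ^ (d * m + 1) := by gcongr; omega
    _ = k ^ ((d + 1) * m + 2) := by ring

theorem pow_sqrt_le_two_rpow {k : ℕ} (d : ℕ) (hk : 1 ≤ k) :
    (k : ℝ) ^ ((d + 1) * Nat.sqrt k + 2) ≤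
      (2 : ℝ) ^ ((d + 3) / Real.log 2 * Real.sqrt k * Real.log k) := by
  have hk' : (1 : ℝ) ≤ k := by exact_mod_cast hk
  have hsqrt : 1 ≤ Real.sqrt k := Real.one_le_sqrt.2 hk'
  have hexp : (((d + 1) * Nat.sqrt k + 2 : ℕ) : ℝ) ≤ (d + 3) * Real.sqrt k := by
    push_cast
    nlinarith [Real.nat_sqrt_le_real_sqrt (a := k)]
  calc (k : ℝ) ^ ((d + 1) * Nat.sqrt k + 2)
      = (k : ℝ) ^ ((((d + 1) * Nat.sqrt k + 2 : ℕ)) : ℝ) := (Real.rpow_natCast _ _).symm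
    _ ≤ (k : ℝ) ^ ((d + 3) * Real.sqrt k) := Real.rpow_le_rpow_of_exponent_le hk' hexp
    _ = (2 : ℝ) ^ ((d + 3) / Real.log 2 * Real.sqrt k * Real.log k) := by
        rw [Real.rpow_def_of_pos (by linarith), Real.rpow_def_of_pos two_pos]
        field_simp

/-- **Few non-isomorphic separations of connected bounded-degree patterns.** For every
degree bound `d` there is a constant `C > 0` such that for every connected graph `P` on
`k ≥ 2` vertices with all degrees at most `d`, any family of pairwise non-isomorphic
separations of `P` of order at most `√k` has size at most `2^(C·√k·log k)`. Two separations
`(X,Y)`, `(X',Y')` are isomorphic if `X ∩ Y = X' ∩ Y'` and some automorphism of `P` fixing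
`X ∩ Y` pointwise maps `X` onto `X'`. -/
theorem count_nonisomorphic_separations (d : ℕ) :
    ∃ C : ℝ, 0 < C ∧ ∀ k : ℕ, 2 ≤ k → ∀ P : SimpleGraph (Fin k), P.Connected →
      (∀ v : Fin k, (P.neighborSet v).ncard ≤ d) →
      ∀ 𝒮 : Set (Set (Fin k) × Set (Fin k)),
        (∀ XY ∈ 𝒮, XY.1 ∪ XY.2 = Set.univ ∧
            (∀ a ∈ XY.1 \ XY.2, ∀ b ∈ XY.2 \ XY.1, ¬ P.Adj a b) ∧
            ((XY.1 ∩ XY.2).ncard : ℝ) ≤ Real.sqrt k) →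
        (∀ XY ∈ 𝒮, ∀ XY' ∈ 𝒮, XY ≠ XY' →
            ¬ (XY.1 ∩ XY.2 = XY'.1 ∩ XY'.2 ∧
                ∃ α : P ≃g P, (∀ v ∈ XY.1 ∩ XY.2, α v = v) ∧ α '' XY.1 = XY'.1)) →
        (𝒮.ncard : ℝ) ≤ (2 : ℝ) ^ (C * Real.sqrt k * Real.log k) := by
  refine ⟨(d + 3) / Real.log 2, div_pos (by positivity) (Real.log_pos one_lt_two), ?_⟩
  intro k hk P hP hdeg 𝒮 h𝒮 _
  set m := Nat.sqrt k
  have hsub : 𝒮 ⊆ {p | P.IsSeparation p.1 p.2 ∧ (p.1 ∩ p.2).ncard ≤ m} := fun p hp =>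
    ⟨⟨(h𝒮 p hp).1, (h𝒮 p hp).2.1⟩,
      (Nat.le_floor (h𝒮 p hp).2.2).trans_eq Real.nat_floor_real_sqrt_eq_nat_sqrt⟩
  have hcount : 𝒮.ncard ≤ k ^ ((d + 1) * m + 2) :=
    calc 𝒮.ncard ≤ (m + 1) * Fintype.card (Fin k) ^ m * 2 ^ (d * m + 1) :=
          (Set.ncard_le_ncard hsub).trans (P.ncard_separations_order_le hP hdeg m)
      _ ≤ k ^ ((d + 1) * m + 2) := by
          rw [Fintype.card_fin]
          exact succ_mul_pow_mul_two_pow_le d hk (Nat.sqrt_lt_self hk)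
  calc (𝒮.ncard : ℝ) ≤ (k : ℝ) ^ ((d + 1) * m + 2) := by exact_mod_cast hcount
    _ ≤ _ := pow_sqrt_le_two_rpow d (by omega)
end

section
/- Let T(ν, u) for ν, u ∈ ℕ satisfy T(ν, u) = 1 when ν ≤ b or u ≤ b (base case with threshold b = √k·polylog(k)), and otherwise T(ν, u) ≤ 2·T(⌈3ν/4⌉, u) + Q·T(ν, u − s) where Q = k^{c log k} and s = ⌊c'√k⌋ ≥ 1. Then T(ν, u) ≤ ν^4 · exp(c₂ · (u/√k) · log² k) for sufficiently large constant c₂ (depending on c, c') and k ≥ 2. -/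
/-!
Each pattern split removes at least `min(u, s) ≳ √k` unmapped vertices, so with rate
`r = c₂ log²k / √k` the factor `exp (r u)` drops by `exp (c₂ · const · log²k) ≥ 8 Q`
once `c₂` is large; meanwhile a balanced split shrinks `ν⁴` by `(13/16)⁴ < 7/16`. Hence
`2·(3ν/4)⁴·E(u) + Q·ν⁴·E(u - s) ≤ (7/8 + 1/8)·ν⁴·E(u)`, and induction on `ν + u` closes.
-/

open Real

namespace RecursionBound

lemma two_mul_pow_four_le {ν : ℕ} (hν : 12 ≤ ν) :
    2 * (((3 * ν + 3) / 4 : ℕ) : ℝ) ^ 4 ≤ 7 / 8 * (ν : ℝ) ^ 4 := by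
  have hshrink : (((3 * ν + 3) / 4 : ℕ) : ℝ) ≤ 13 / 16 * ν := by
    have : 16 * ((3 * ν + 3) / 4) ≤ 13 * ν := by omega
    have : (16 : ℝ) * ((3 * ν + 3) / 4 : ℕ) ≤ 13 * ν := by exact_mod_cast this
    linarith
  calc 2 * (((3 * ν + 3) / 4 : ℕ) : ℝ) ^ 4 ≤ 2 * (13 / 16 * ν) ^ 4 := by gcongr
    _ ≤ 7 / 8 * (ν : ℝ) ^ 4 := by nlinarith [pow_nonneg (Nat.cast_nonneg (α := ℝ) ν) 4]

lemma eight_mul_exp_le_exp {a b : ℝ} (h : a + 3 ≤ b) : 8 * exp a ≤ exp b := by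
  have h8 : (8 : ℝ) ≤ exp 3 := by nlinarith [quadratic_le_exp_of_nonneg (x := 3) (by norm_num)]
  calc 8 * exp a ≤ exp 3 * exp a := by gcongr
    _ = exp (a + 3) := by rw [← exp_add, add_comm]
    _ ≤ exp b := exp_le_exp.mpr h

lemma eight_mul_exp_mul_exp_sub_le {a r : ℝ} {u s : ℕ} (h : a + 3 ≤ r * (min u s : ℕ)) :
    8 * exp a * exp (r * (u - s : ℕ)) ≤ exp (r * u) := by
  have hu : ((u - s : ℕ) : ℝ) + (min u s : ℕ) = u := by exact_mod_cast Nat.sub_add_min_cancel u s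
  calc 8 * exp a * exp (r * (u - s : ℕ)) ≤ exp (r * (min u s : ℕ)) * exp (r * (u - s : ℕ)) := by
        gcongr; exact eight_mul_exp_le_exp h
    _ = exp (r * u) := by rw [← exp_add, ← hu]; ring_nf

lemma half_le_floor {x : ℝ} (hx : 1 ≤ ⌊x⌋₊) : x / 2 ≤ ⌊x⌋₊ := by
  have : (1 : ℝ) ≤ ⌊x⌋₊ := by exact_mod_cast hx
  linarith [Nat.lt_floor_add_one x]

lemma mul_le_min_floor {a x L : ℝ} {u : ℕ} (hx : 0 ≤ x) (hL : 1 / 4 ≤ L) (hu : x * L ≤ u)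
    (hs : 1 ≤ ⌊a * x⌋₊) : min (a / 2) (1 / 4) * x ≤ (min u ⌊a * x⌋₊ : ℕ) := by
  rcases le_total u ⌊a * x⌋₊ with h | h
  · rw [min_eq_left h]
    nlinarith [min_le_right (a / 2) (1 / 4)]
  · rw [min_eq_right h]
    nlinarith [min_le_left (a / 2) (1 / 4), half_le_floor hs]

lemma quarter_le_log_sq {k : ℕ} (hk : 2 ≤ k) : 1 / 4 ≤ log k ^ 2 := by
  have h2 : log 2 ≤ log k := log_le_log (by norm_num) (by exact_mod_cast hk)
  nlinarith [log_two_gt_d9]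

theorem le_pow_four_mul_exp {b s : ℕ} {Q r : ℝ} (hb : 11 ≤ b) (hs : 1 ≤ s) (hQ : 0 ≤ Q)
    (hr : 0 ≤ r) (hgap : ∀ u : ℕ, b < u → 8 * Q * exp (r * (u - s : ℕ)) ≤ exp (r * u))
    {T : ℕ → ℕ → ℝ} (hbase : ∀ ν u : ℕ, (ν ≤ b ∨ u ≤ b) → T ν u = 1)
    (hrec : ∀ ν u : ℕ, b < ν → b < u →
      T ν u ≤ 2 * T ((3 * ν + 3) / 4) u + Q * T ν (u - s))
    (ν u : ℕ) (hν : 1 ≤ ν) : T ν u ≤ (ν : ℝ) ^ 4 * exp (r * u) := by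
  by_cases hsmall : ν ≤ b ∨ u ≤ b
  · rw [hbase ν u hsmall]
    have : (1 : ℝ) ≤ ν := by exact_mod_cast hν
    exact one_le_mul_of_one_le_of_one_le (one_le_pow₀ this) (one_le_exp (by positivity))
  simp only [not_or, not_le] at hsmall
  obtain ⟨hνb, hub⟩ := hsmall
  have ih_balanced := le_pow_four_mul_exp hb hs hQ hr hgap hbase hrec ((3 * ν + 3) / 4) u
    (by omega)
  have ih_pattern := le_pow_four_mul_exp hb hs hQ hr hgap hbase hrec ν (u - s) hν
  calc T ν u ≤ 2 * T ((3 * ν + 3) / 4) u + Q * T ν (u - s) := hrec ν u hνb hub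
    _ ≤ 2 * ((((3 * ν + 3) / 4 : ℕ) : ℝ) ^ 4 * exp (r * u))
        + Q * ((ν : ℝ) ^ 4 * exp (r * (u - s : ℕ))) := by gcongr
    _ = (2 * (((3 * ν + 3) / 4 : ℕ) : ℝ) ^ 4) * exp (r * u)
        + (ν : ℝ) ^ 4 * (Q * exp (r * (u - s : ℕ))) := by ring
    _ ≤ (7 / 8 * (ν : ℝ) ^ 4) * exp (r * u) + (ν : ℝ) ^ 4 * (exp (r * u) / 8) := by
        have hpattern : Q * exp (r * (u - s : ℕ)) ≤ exp (r * u) / 8 := by linarith [hgap u hub]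
        gcongr ?_ * _ + _ * ?_
        exact two_mul_pow_four_le (by omega)
    _ = (ν : ℝ) ^ 4 * exp (r * u) := by ring
termination_by ν + u
decreasing_by all_goals omega

end RecursionBound

open RecursionBound

/-- **Recursion bound for the divide-and-conquer subproblem count.** Suppose
`T(ν, u) = 1` whenever `ν ≤ b` or `u ≤ b`, where the base-case threshold `b` is at least
`√k · polylog(k)` (here `√k · log²k ≤ b` and `b ≥ 13`), and otherwise
`T(ν, u) ≤ 2·T(⌈3ν/4⌉, u) + Q·T(ν, u − s)` with `Q = k^{c·log k}` and
`s = ⌊c'·√k⌋ ≥ 1`. Then, for a sufficiently large constant `c₂` (depending only on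
`c, c'`) and all `k ≥ 2`, `T(ν, u) ≤ ν⁴ · exp(c₂ · (u/√k) · log²k)` for all `ν ≥ 1`. -/
theorem recursion_bound (c c' : ℝ) (hc : 0 < c) (hc' : 0 < c') :
    ∃ c₂ : ℝ, 0 < c₂ ∧ ∀ k : ℕ, 2 ≤ k →
      ∀ b s : ℕ,
        Real.sqrt k * (Real.log k) ^ 2 ≤ (b : ℝ) → 13 ≤ b →
        s = Nat.floor (c' * Real.sqrt k) → 1 ≤ s →
      ∀ Q : ℝ, Q = (k : ℝ) ^ (c * Real.log k) →
      ∀ T : ℕ → ℕ → ℝ,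
        (∀ ν u : ℕ, (ν ≤ b ∨ u ≤ b) → T ν u = 1) →
        (∀ ν u : ℕ, b < ν → b < u →
          T ν u ≤ 2 * T ((3 * ν + 3) / 4) u + Q * T ν (u - s)) →
        ∀ ν u : ℕ, 1 ≤ ν →
          T ν u ≤ (ν : ℝ) ^ 4 *
            Real.exp (c₂ * ((u : ℝ) / Real.sqrt k) * (Real.log k) ^ 2) := by
  set m := min (c' / 2) (1 / 4 : ℝ)
  have hm : 0 < m := lt_min (by positivity) (by norm_num)
  refine ⟨(c + 12) / m, by positivity, ?_⟩
  intro k hk b s hb hb13 hs_def hs Q hQ T hbase hrec ν u hν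
  have hL := quarter_le_log_sq hk
  have hsqrt : 0 < √(k : ℝ) := by positivity
  set r := (c + 12) / m * log k ^ 2 / √k
  have hgap (u : ℕ) (hu : b < u) : 8 * Q * exp (r * (u - s : ℕ)) ≤ exp (r * u) := by
    have hmin := mul_le_min_floor hsqrt.le hL (hb.trans (by exact_mod_cast hu.le)) (hs_def ▸ hs)
    rw [hQ, rpow_def_of_pos (by positivity)]
    refine eight_mul_exp_mul_exp_sub_le ?_
    calc log k * (c * log k) + 3 ≤ (c + 12) * log k ^ 2 := by nlinarith
      _ = r * (m * √k) := by simp only [r]; field_simp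
      _ ≤ r * (min u s : ℕ) := by rw [hs_def]; gcongr
  convert le_pow_four_mul_exp (by omega) hs (hQ ▸ by positivity) (by positivity) hgap hbase hrec
    ν u hν using 3
  ring
end
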